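/- arXiv:2510.06583 — 2 statements merged into one kernel-verified Lean document; each statement's English description precedes it below -/
import Mathlib

section
/- Let 𝒜, ℬ ⊂ ℂ^{n×n} be sets of matrices. If there exists β ∈ ℝ such that ℬ satisfies the β-arc property, then for any α ∈ ℝ, SRG_{α+β}(𝒜ℬ) ⊂ SRG_α(𝒜) · SRG_β(ℬ), where 𝒜ℬ = {AB : A ∈ 𝒜, B ∈ ℬ} and the product on the right is the elementwise product of subsets of ℂ. -/
open scoped Pointwise Classical
open Complex

noncomputable section SRGDefs

/-- Apply a matrix to a vector in Euclidean space. -/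
def mapply {n : ℕ} (C : Matrix (Fin n) (Fin n) ℂ) (x : EuclideanSpace ℂ (Fin n)) :
    EuclideanSpace ℂ (Fin n) :=
  Matrix.toEuclideanLin C x

/-- The θ-angle `∠_θ(x,y) = arccos (Re ⟨x, e^{-iθ} y⟩ / (‖x‖‖y‖))` between complex vectors,
with value `0` if `x = 0` or `y = 0`. -/
def angleTheta {n : ℕ} (θ : ℝ) (x y : EuclideanSpace ℂ (Fin n)) : ℝ :=
  if x = 0 ∨ y = 0 then 0
  else Real.arccos ((inner ℂ x ((Complex.exp (-(θ : ℂ) * Complex.I)) • y) : ℂ).re / (‖x‖ * ‖y‖))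

/-- The classical angle `∠(x,y) = arccos (Re ⟨x, y⟩ / (‖x‖‖y‖))` between complex vectors,
with value `0` if `x = 0` or `y = 0`. -/
def angleStd {n : ℕ} (x y : EuclideanSpace ℂ (Fin n)) : ℝ :=
  if x = 0 ∨ y = 0 then 0
  else Real.arccos ((inner ℂ x y : ℂ).re / (‖x‖ * ‖y‖))

/-- The θ-symmetric scaled relative graph
`SRG_θ(C) = { (‖Cx‖/‖x‖)·e^{i(θ ± ∠_θ(x,Cx))} : 0 ≠ x ∈ ℂ^n }`. -/
def SRGt {n : ℕ} (θ : ℝ) (C : Matrix (Fin n) (Fin n) ℂ) : Set ℂ :=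
  { w | ∃ x : EuclideanSpace ℂ (Fin n), x ≠ 0 ∧
      (w = (↑(‖mapply C x‖ / ‖x‖) : ℂ) *
          Complex.exp ((↑(θ + angleTheta θ x (mapply C x)) : ℂ) * Complex.I) ∨
       w = (↑(‖mapply C x‖ / ‖x‖) : ℂ) *
          Complex.exp ((↑(θ - angleTheta θ x (mapply C x)) : ℂ) * Complex.I)) }

/-- The standard scaled relative graph
`SRG(C) = { (‖Cx‖/‖x‖)·e^{±i∠(x,Cx)} : 0 ≠ x ∈ ℂ^n }`. -/
def SRGstd {n : ℕ} (C : Matrix (Fin n) (Fin n) ℂ) : Set ℂ :=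
  { w | ∃ x : EuclideanSpace ℂ (Fin n), x ≠ 0 ∧
      (w = (↑(‖mapply C x‖ / ‖x‖) : ℂ) *
          Complex.exp ((↑(angleStd x (mapply C x)) : ℂ) * Complex.I) ∨
       w = (↑(‖mapply C x‖ / ‖x‖) : ℂ) *
          Complex.exp (-((↑(angleStd x (mapply C x)) : ℂ) * Complex.I))) }

/-- θ-symmetric SRG of a set of matrices. -/
def SRGtSet {n : ℕ} (θ : ℝ) (𝒞 : Set (Matrix (Fin n) (Fin n) ℂ)) : Set ℂ :=
  ⋃ C ∈ 𝒞, SRGt θ C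

/-- Standard SRG of a set of matrices. -/
def SRGstdSet {n : ℕ} (𝒞 : Set (Matrix (Fin n) (Fin n) ℂ)) : Set ℂ :=
  ⋃ C ∈ 𝒞, SRGstd C

/-- `Arc_θ^+(z, z̄e^{2iθ}) = { |z|·e^{i(μ·arg z + θ(1−μ))} : μ ∈ [−1,1] }`. -/
def arcPlus (θ : ℝ) (z : ℂ) : Set ℂ :=
  { w | ∃ μ : ℝ, μ ∈ Set.Icc (-1 : ℝ) 1 ∧
      w = (↑‖z‖ : ℂ) *
        Complex.exp ((↑(μ * Complex.arg z + θ * (1 - μ)) : ℂ) * Complex.I) }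

/-- `Arc_θ^−(z, z̄e^{2iθ}) = −Arc_θ^+(−z, −z̄e^{2iθ})`. -/
def arcMinus (θ : ℝ) (z : ℂ) : Set ℂ := -(arcPlus θ (-z))

/-- `Arc^+(z, z̄) = { |z|·e^{iμ·arg z} : μ ∈ [−1,1] }`. -/
def arcPlus0 (z : ℂ) : Set ℂ :=
  { w | ∃ μ : ℝ, μ ∈ Set.Icc (-1 : ℝ) 1 ∧
      w = (↑‖z‖ : ℂ) * Complex.exp ((↑(μ * Complex.arg z) : ℂ) * Complex.I) }

/-- `Arc^−(z, z̄) = −Arc^+(−z, −z̄)`. -/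
def arcMinus0 (z : ℂ) : Set ℂ := -(arcPlus0 (-z))

/-- A matrix set satisfies the θ-arc property. -/
def arcProp {n : ℕ} (θ : ℝ) (𝒞 : Set (Matrix (Fin n) (Fin n) ℂ)) : Prop :=
  (∀ z ∈ SRGtSet θ 𝒞, arcPlus θ z ⊆ SRGtSet θ 𝒞) ∨
  (∀ z ∈ SRGtSet θ 𝒞, arcMinus θ z ⊆ SRGtSet θ 𝒞)

/-- A matrix set satisfies the (standard) arc property. -/
def arcPropStd {n : ℕ} (𝒞 : Set (Matrix (Fin n) (Fin n) ℂ)) : Prop :=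
  (∀ z ∈ SRGstdSet 𝒞, arcPlus0 z ⊆ SRGstdSet 𝒞) ∨
  (∀ z ∈ SRGstdSet 𝒞, arcMinus0 z ⊆ SRGstdSet 𝒞)

/-- The line segment `[z₁, z₂] = { μz₁ + (1−μ)z₂ : μ ∈ [0,1] }`. -/
def segmentC (z₁ z₂ : ℂ) : Set ℂ :=
  { w | ∃ μ : ℝ, μ ∈ Set.Icc (0 : ℝ) 1 ∧ w = (↑μ : ℂ) * z₁ + (↑(1 - μ) : ℂ) * z₂ }

/-- A matrix set satisfies the θ-chord property. -/
def chordProp {n : ℕ} (θ : ℝ) (𝒞 : Set (Matrix (Fin n) (Fin n) ℂ)) : Prop :=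
  ∀ z ∈ SRGtSet θ 𝒞,
    segmentC z ((starRingEnd ℂ) z * Complex.exp ((↑(2 * θ) : ℂ) * Complex.I)) ⊆ SRGtSet θ 𝒞

/-- The arc hull `Hull_arc(SRG_θ(C)) = ⋃_{z ∈ SRG_θ(C)} Arc_θ^+(z, z̄e^{2iθ})`. -/
def hullArc {n : ℕ} (θ : ℝ) (C : Matrix (Fin n) (Fin n) ℂ) : Set ℂ :=
  ⋃ z ∈ SRGt θ C, arcPlus θ z

/-- The phase spread `Γ_θ(C) = sup_{0 ≠ x} ∠_θ(x, Cx)`. -/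
def phaseSpread {n : ℕ} (θ : ℝ) (C : Matrix (Fin n) (Fin n) ℂ) : ℝ :=
  sSup { a : ℝ | ∃ x : EuclideanSpace ℂ (Fin n), x ≠ 0 ∧ a = angleTheta θ x (mapply C x) }

/-- The largest singular value `σ_max(C) = max_{‖x‖=1} ‖Cx‖`. -/
def sigmaMax {n : ℕ} (C : Matrix (Fin n) (Fin n) ℂ) : ℝ :=
  sSup { a : ℝ | ∃ x : EuclideanSpace ℂ (Fin n), ‖x‖ = 1 ∧ a = ‖mapply C x‖ }

/-- The smallest singular value `σ_min(C) = min_{‖x‖=1} ‖Cx‖`. -/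
def sigmaMin {n : ℕ} (C : Matrix (Fin n) (Fin n) ℂ) : ℝ :=
  sInf { a : ℝ | ∃ x : EuclideanSpace ℂ (Fin n), ‖x‖ = 1 ∧ a = ‖mapply C x‖ }

/-- The spectrum `Λ(C)` of a matrix: the set of eigenvalues. -/
def eigs {n : ℕ} (C : Matrix (Fin n) (Fin n) ℂ) : Set ℂ :=
  { μ : ℂ | ∃ v : Fin n → ℂ, v ≠ 0 ∧ C.mulVec v = μ • v }

end SRGDefs


section AngleLemmas

open InnerProductGeometry Real

variable {V : Type*} [NormedAddCommGroup V] [InnerProductSpace ℝ V]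

private lemma key_gram {x y z : V} (hx : ‖x‖ = 1) (hy : ‖y‖ = 1) (hz : ‖z‖ = 1) :
    ((inner ℝ x z : ℝ) - inner ℝ x y * inner ℝ y z) ^ 2 ≤
      (1 - (inner ℝ x y : ℝ) ^ 2) * (1 - (inner ℝ y z : ℝ) ^ 2) := by
  have h := real_inner_mul_inner_self_le (x - (inner ℝ x y : ℝ) • y) (z - (inner ℝ y z : ℝ) • y)
  have hxx : (inner ℝ x x : ℝ) = 1 := by rw [real_inner_self_eq_norm_mul_norm, hx]; ring
  have hyy : (inner ℝ y y : ℝ) = 1 := by rw [real_inner_self_eq_norm_mul_norm, hy]; ring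
  have hzz : (inner ℝ z z : ℝ) = 1 := by rw [real_inner_self_eq_norm_mul_norm, hz]; ring
  simp only [inner_sub_left, inner_sub_right, real_inner_smul_left, real_inner_smul_right,
    hxx, hyy, hzz] at h
  have e1 : (inner ℝ y x : ℝ) = inner ℝ x y := real_inner_comm x y
  have e2 : (inner ℝ z y : ℝ) = inner ℝ y z := real_inner_comm y z
  simp only [e1, e2, mul_one] at h
  nlinarith [h]

private lemma angle_triangle_unit {x y z : V} (hx : ‖x‖ = 1) (hy : ‖y‖ = 1) (hz : ‖z‖ = 1) :
    angle x z ≤ angle x y + angle y z := by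
  by_cases hp : π ≤ angle x y + angle y z
  · exact le_trans (angle_le_pi x z) hp
  push_neg at hp
  have h1 : |(inner ℝ x y : ℝ)| ≤ 1 := by simpa [hx, hy] using abs_real_inner_le_norm x y
  have h2 : |(inner ℝ y z : ℝ)| ≤ 1 := by simpa [hy, hz] using abs_real_inner_le_norm y z
  have hc1 : Real.cos (angle x y) = inner ℝ x y := by rw [cos_angle, hx, hy]; simp
  have hc2 : Real.cos (angle y z) = inner ℝ y z := by rw [cos_angle, hy, hz]; simp
  have hc3 : Real.cos (angle x z) = inner ℝ x z := by rw [cos_angle, hx, hz]; simp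
  have hs1 : Real.sin (angle x y) = √(1 - (inner ℝ x y : ℝ) ^ 2) := by
    rw [angle, Real.sin_arccos, hx, hy]; simp
  have hs2 : Real.sin (angle y z) = √(1 - (inner ℝ y z : ℝ) ^ 2) := by
    rw [angle, Real.sin_arccos, hy, hz]; simp
  have key := key_gram hx hy hz
  have hnn1 : (0:ℝ) ≤ 1 - (inner ℝ x y : ℝ) ^ 2 := by nlinarith [abs_le.mp h1]
  have hnn2 : (0:ℝ) ≤ 1 - (inner ℝ y z : ℝ) ^ 2 := by nlinarith [abs_le.mp h2]
  have hsqrt : |(inner ℝ x z : ℝ) - inner ℝ x y * inner ℝ y z| ≤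
      √(1 - (inner ℝ x y : ℝ) ^ 2) * √(1 - (inner ℝ y z : ℝ) ^ 2) := by
    rw [← Real.sqrt_mul hnn1]
    rw [← Real.sqrt_sq_eq_abs]
    exact Real.sqrt_le_sqrt key
  have hcos : Real.cos (angle x y + angle y z) ≤ Real.cos (angle x z) := by
    rw [Real.cos_add, hc1, hc2, hc3, hs1, hs2]
    have := abs_le.mp hsqrt
    linarith [this.1]
  by_contra hlt
  push_neg at hlt
  have h0 : 0 ≤ angle x y + angle y z := by
    have := angle_nonneg x y; have := angle_nonneg y z; linarith
  have hmono := Real.strictAntiOn_cos ⟨h0, hp.le⟩ ⟨angle_nonneg x z, angle_le_pi x z⟩ hlt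
  linarith

private lemma my_angle_triangle (x y z : V) : angle x z ≤ angle x y + angle y z := by
  by_cases hx : x = 0
  · rw [hx, angle_zero_left, angle_zero_left]; linarith [angle_nonneg y z]
  by_cases hy : y = 0
  · rw [hy, angle_zero_right, angle_zero_left]; linarith [angle_le_pi x z]
  by_cases hz : z = 0
  · rw [hz, angle_zero_right, angle_zero_right]; linarith [angle_nonneg x y]
  have hxn : (0:ℝ) < ‖x‖⁻¹ := inv_pos.2 (norm_pos_iff.2 hx)
  have hyn : (0:ℝ) < ‖y‖⁻¹ := inv_pos.2 (norm_pos_iff.2 hy)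
  have hzn : (0:ℝ) < ‖z‖⁻¹ := inv_pos.2 (norm_pos_iff.2 hz)
  have hux : ‖(‖x‖⁻¹ • x : V)‖ = 1 := by
    rw [norm_smul, Real.norm_eq_abs, abs_of_pos hxn, inv_mul_cancel₀ (norm_ne_zero_iff.2 hx)]
  have huy : ‖(‖y‖⁻¹ • y : V)‖ = 1 := by
    rw [norm_smul, Real.norm_eq_abs, abs_of_pos hyn, inv_mul_cancel₀ (norm_ne_zero_iff.2 hy)]
  have huz : ‖(‖z‖⁻¹ • z : V)‖ = 1 := by
    rw [norm_smul, Real.norm_eq_abs, abs_of_pos hzn, inv_mul_cancel₀ (norm_ne_zero_iff.2 hz)]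
  have h := angle_triangle_unit hux huy huz
  simp only [angle_smul_left_of_pos _ _ hxn, angle_smul_left_of_pos _ _ hyn,
    angle_smul_left_of_pos _ _ hzn, angle_smul_right_of_pos _ _ hxn,
    angle_smul_right_of_pos _ _ hyn, angle_smul_right_of_pos _ _ hzn] at h
  exact h

private lemma my_angle_sum (x y z : V) : angle x z + angle x y + angle y z ≤ 2 * π := by
  have h := my_angle_triangle x (-y) z
  rw [angle_neg_right, angle_neg_left] at h
  linarith

end AngleLemmas

section ComplexLemmas

open Complex

variable {n : ℕ}

private lemma rinner_eq (x y : EuclideanSpace ℂ (Fin n)) :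
    inner ℝ x y = (inner ℂ x y : ℂ).re := by
  simp [PiLp.inner_apply, Complex.inner, map_sum, mul_comm]

private lemma norm_exp_neg_smul (θ : ℝ) (v : EuclideanSpace ℂ (Fin n)) :
    ‖Complex.exp (-(θ:ℂ) * I) • v‖ = ‖v‖ := by
  rw [norm_smul]
  simp [Complex.norm_exp]

private lemma exp_neg_smul_ne_zero (θ : ℝ) {v : EuclideanSpace ℂ (Fin n)} (hv : v ≠ 0) :
    Complex.exp (-(θ:ℂ) * I) • v ≠ 0 :=
  smul_ne_zero (Complex.exp_ne_zero _) hv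

private lemma my_angle_unit_smul (c : ℂ) (hc : ‖c‖ = 1)
    (u v : EuclideanSpace ℂ (Fin n)) :
    InnerProductGeometry.angle (c • u) (c • v) = InnerProductGeometry.angle u v := by
  unfold InnerProductGeometry.angle
  rw [rinner_eq, rinner_eq, inner_smul_left, inner_smul_right, ← mul_assoc,
    Complex.conj_mul', norm_smul, norm_smul]
  simp [hc]

private lemma angleTheta_eq (θ : ℝ) {x v : EuclideanSpace ℂ (Fin n)} (hx : x ≠ 0) (hv : v ≠ 0) :
    angleTheta θ x v = InnerProductGeometry.angle x (Complex.exp (-(θ:ℂ) * I) • v) := by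
  rw [angleTheta, if_neg (by simp [hx, hv]), InnerProductGeometry.angle, rinner_eq,
    norm_exp_neg_smul]

private lemma angleTheta_nonneg (θ : ℝ) (x v : EuclideanSpace ℂ (Fin n)) :
    0 ≤ angleTheta θ x v := by
  unfold angleTheta; split_ifs
  · exact le_refl 0
  · exact Real.arccos_nonneg _

private lemma angleTheta_le_pi (θ : ℝ) (x v : EuclideanSpace ℂ (Fin n)) :
    angleTheta θ x v ≤ Real.pi := by
  unfold angleTheta; split_ifs
  · exact Real.pi_nonneg
  · exact Real.arccos_le_pi _

private lemma mapply_mul (A B : Matrix (Fin n) (Fin n) ℂ) (x : EuclideanSpace ℂ (Fin n)) :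
    mapply (A * B) x = mapply A (mapply B x) := by
  simp [mapply, Matrix.toEuclideanLin_apply, Matrix.mulVec_mulVec]

private lemma mapply_zero (A : Matrix (Fin n) (Fin n) ℂ) : mapply A (0 : EuclideanSpace ℂ (Fin n)) = 0 :=
  map_zero (Matrix.toEuclideanLin A)

private lemma abs_rho_exp (ρ φ : ℝ) (hρ : 0 ≤ ρ) :
    ‖(ρ:ℂ) * Complex.exp ((φ:ℂ) * I)‖ = ρ := by
  simp [Complex.norm_exp, _root_.abs_of_nonneg hρ]

private lemma arg_exists (ρ φ : ℝ) (hρ : 0 < ρ) :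
    ∃ k : ℤ, Complex.arg ((ρ:ℂ) * Complex.exp ((φ:ℂ) * I)) = φ + 2 * Real.pi * k := by
  set z := (ρ:ℂ) * Complex.exp ((φ:ℂ) * I) with hz
  have habs : ‖z‖ = ρ := abs_rho_exp ρ φ hρ.le
  have h1 : (ρ:ℂ) * Complex.exp ((Complex.arg z : ℂ) * I) = (ρ:ℂ) * Complex.exp ((φ:ℂ) * I) := by
    rw [← hz]; rw [← habs]; exact Complex.norm_mul_exp_arg_mul_I z
  have h2 : Complex.exp ((Complex.arg z : ℂ) * I) = Complex.exp ((φ:ℂ) * I) :=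
    mul_left_cancel₀ (by exact_mod_cast hρ.ne') h1
  have h3 : Complex.exp (((Complex.arg z : ℂ) - (φ:ℂ)) * I) = 1 := by
    rw [sub_mul, Complex.exp_sub, h2, div_self (Complex.exp_ne_zero _)]
  obtain ⟨k, hk⟩ := Complex.exp_eq_one_iff.mp h3
  refine ⟨k, ?_⟩
  have h4 : ((Complex.arg z : ℂ) - (φ:ℂ)) = (k:ℂ) * (2 * Real.pi) := by
    have := mul_right_cancel₀ Complex.I_ne_zero
      (by rw [hk]; ring_nf :
        ((Complex.arg z : ℂ) - (φ:ℂ)) * I = ((k:ℂ) * (2*Real.pi)) * I)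
    exact this
  have h5 : (Complex.arg z : ℝ) - φ = (k:ℝ) * (2 * Real.pi) := by exact_mod_cast h4
  linarith

end ComplexLemmas


private lemma mul_form (r1 r2 t1 t2 : ℝ) :
    ((r1:ℂ) * Complex.exp ((t1:ℂ) * Complex.I)) * ((r2:ℂ) * Complex.exp ((t2:ℂ) * Complex.I)) =
      ((r1 * r2 : ℝ) : ℂ) * Complex.exp (((t1 + t2 : ℝ) : ℂ) * Complex.I) := by
  push_cast
  rw [add_mul, Complex.exp_add]
  ring

private lemma neg_form (R T : ℝ) :
    -((R:ℂ) * Complex.exp ((T:ℂ) * Complex.I)) =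
      (R:ℂ) * Complex.exp (((T + Real.pi : ℝ) : ℂ) * Complex.I) := by
  push_cast
  rw [add_mul, Complex.exp_add, Complex.exp_pi_mul_I]
  ring

private lemma exp_period (T : ℝ) :
    Complex.exp (((T + 2 * Real.pi : ℝ) : ℂ) * Complex.I) =
      Complex.exp ((T:ℂ) * Complex.I) := by
  push_cast
  rw [add_mul, Complex.exp_add, Complex.exp_two_pi_mul_I, mul_one]

set_option maxHeartbeats 1600000 in
/-- submultiplicativity of θ-symmetric SRGs under the β-arc property. -/
theorem stmt10 {n : ℕ} (𝒜 ℬ : Set (Matrix (Fin n) (Fin n) ℂ)) (β : ℝ)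
    (harc : arcProp β ℬ) (α : ℝ) :
    SRGtSet (α + β) (𝒜 * ℬ) ⊆ SRGtSet α 𝒜 * SRGtSet β ℬ := by
  intro w hw
  simp only [SRGtSet, Set.mem_iUnion, exists_prop] at hw
  obtain ⟨C, hC, hwC⟩ := hw
  rw [Set.mem_mul] at hC
  obtain ⟨A, hA, B, hB, rfl⟩ := hC
  obtain ⟨x, hx, hw⟩ := hwC
  rw [Set.mem_mul]
  have memA : ∀ s, s ∈ SRGt α A → s ∈ SRGtSet α 𝒜 := fun s hs => Set.mem_biUnion hA hs
  have memB : ∀ t, t ∈ SRGt β B → t ∈ SRGtSet β ℬ := fun t ht => Set.mem_biUnion hB ht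
  rw [mapply_mul] at hw
  set y := mapply B x with hydef
  by_cases hy : y = 0
  · have hw0 : w = 0 := by
      rcases hw with h | h <;> rw [h, hy, mapply_zero] <;> simp
    refine ⟨(↑(‖mapply A x‖ / ‖x‖) : ℂ) *
        Complex.exp ((↑(α + angleTheta α x (mapply A x)) : ℂ) * Complex.I),
      memA _ ⟨x, hx, Or.inl rfl⟩,
      (↑(‖y‖ / ‖x‖) : ℂ) * Complex.exp ((↑(β + angleTheta β x y) : ℂ) * Complex.I),
      memB _ ⟨x, hx, Or.inl rfl⟩, ?_⟩
    rw [hw0, hy]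
    simp
  set z := mapply A y with hzdef
  by_cases hz : z = 0
  · have hw0 : w = 0 := by
      rcases hw with h | h <;> rw [h, hz] <;> simp
    refine ⟨(↑(‖z‖ / ‖y‖) : ℂ) *
        Complex.exp ((↑(α + angleTheta α y z) : ℂ) * Complex.I),
      memA _ ⟨y, hy, Or.inl rfl⟩,
      (↑(‖y‖ / ‖x‖) : ℂ) * Complex.exp ((↑(β + angleTheta β x y) : ℂ) * Complex.I),
      memB _ ⟨x, hx, Or.inl rfl⟩, ?_⟩
    rw [hw0, hz]
    simp
  -- main case: x, y, z all nonzero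
  have hnx : ‖x‖ ≠ 0 := norm_ne_zero_iff.2 hx
  have hny : ‖y‖ ≠ 0 := norm_ne_zero_iff.2 hy
  have hnz : ‖z‖ ≠ 0 := norm_ne_zero_iff.2 hz
  set γ := angleTheta (α + β) x z with hγdef
  set a := angleTheta α y z with hadef
  set b := angleTheta β x y with hbdef
  obtain ⟨ε, hε, hw⟩ : ∃ ε : ℝ, (ε = 1 ∨ ε = -1) ∧
      w = (↑(‖z‖ / ‖x‖) : ℂ) * Complex.exp ((↑(α + β + ε * γ) : ℂ) * Complex.I) := by
    rcases hw with h | h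
    · exact ⟨1, Or.inl rfl, by rw [h]; push_cast; ring_nf⟩
    · exact ⟨-1, Or.inr rfl, by rw [h]; push_cast; ring_nf⟩
  have hεabs : |ε| = 1 := by rcases hε with h | h <;> rw [h] <;> norm_num
  have hb : b = InnerProductGeometry.angle x (Complex.exp (-(β:ℂ) * Complex.I) • y) := by
    rw [hbdef]; exact angleTheta_eq β hx hy
  have hγ' : γ = InnerProductGeometry.angle x
      (Complex.exp (-((α + β : ℝ):ℂ) * Complex.I) • z) := by
    rw [hγdef]; exact angleTheta_eq (α + β) hx hz
  have ha : a = InnerProductGeometry.angle (Complex.exp (-(β:ℂ) * Complex.I) • y)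
      (Complex.exp (-((α + β : ℝ):ℂ) * Complex.I) • z) := by
    rw [hadef, angleTheta_eq α hy hz,
      ← my_angle_unit_smul (Complex.exp (-(β:ℂ) * Complex.I)) (by simp [Complex.norm_exp]) y
        (Complex.exp (-(α:ℂ) * Complex.I) • z)]
    congr 1
    rw [smul_smul, ← Complex.exp_add]
    congr 1
    push_cast
    ring
  have tri1 : γ ≤ b + a := by
    rw [hγ', hb, ha]; exact my_angle_triangle _ _ _
  have tri2 : a ≤ b + γ := by
    rw [hγ', hb, ha]
    have h1 := my_angle_triangle (Complex.exp (-(β:ℂ) * Complex.I) • y) x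
      (Complex.exp (-((α + β : ℝ):ℂ) * Complex.I) • z)
    rwa [InnerProductGeometry.angle_comm (Complex.exp (-(β:ℂ) * Complex.I) • y) x] at h1
  have tri3 : b ≤ γ + a := by
    rw [hγ', hb, ha]
    have h1 := my_angle_triangle x (Complex.exp (-((α + β : ℝ):ℂ) * Complex.I) • z)
      (Complex.exp (-(β:ℂ) * Complex.I) • y)
    rwa [InnerProductGeometry.angle_comm (Complex.exp (-((α + β : ℝ):ℂ) * Complex.I) • z)
      (Complex.exp (-(β:ℂ) * Complex.I) • y)] at h1
  have hsum : γ + b + a ≤ 2 * Real.pi := by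
    rw [hγ', hb, ha]; exact my_angle_sum _ _ _
  have hb0 : 0 ≤ b := by rw [hbdef]; exact angleTheta_nonneg β x y
  have hbπ : b ≤ Real.pi := by rw [hbdef]; exact angleTheta_le_pi β x y
  have hρB_pos : 0 < ‖y‖ / ‖x‖ := div_pos (norm_pos_iff.2 hy) (norm_pos_iff.2 hx)
  have hr : ‖z‖ / ‖x‖ = ‖z‖ / ‖y‖ * (‖y‖ / ‖x‖) := by field_simp
  set zB : ℂ := (↑(‖y‖ / ‖x‖) : ℂ) * Complex.exp ((↑(β + b) : ℂ) * Complex.I) with hzBdef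
  have hzB : zB ∈ SRGtSet β ℬ := memB _ ⟨x, hx, Or.inl rfl⟩
  rcases harc with hArc | hArc
  · -- arcPlus case
    have habsB : ‖zB‖ = ‖y‖ / ‖x‖ := by
      rw [hzBdef]; exact abs_rho_exp _ _ hρB_pos.le
    obtain ⟨k, hk⟩ : ∃ k : ℤ, Complex.arg zB = β + b + 2 * Real.pi * k := by
      rw [hzBdef]; exact arg_exists _ _ hρB_pos
    have hcge : b ≤ |Complex.arg zB - β| := by
      rcases le_or_gt 0 (k:ℝ) with h | h
      · have h2 : b ≤ Complex.arg zB - β := by nlinarith [Real.pi_pos]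
        exact h2.trans (le_abs_self _)
      · have hk1 : (k:ℝ) ≤ -1 := by
          have h3 : k < 0 := by exact_mod_cast h
          have h4 : k ≤ -1 := by omega
          exact_mod_cast h4
        have h2 : b ≤ -(Complex.arg zB - β) := by nlinarith [Real.pi_pos]
        exact h2.trans (neg_le_abs _)
    have habsd : |ε * (γ - a)| ≤ b := by
      rw [abs_mul, hεabs, one_mul, abs_le]
      constructor <;> linarith
    obtain ⟨μ, hμ1, hμc⟩ : ∃ μ : ℝ, |μ| ≤ 1 ∧ μ * (Complex.arg zB - β) = ε * (γ - a) := by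
      by_cases hc0 : Complex.arg zB - β = 0
      · refine ⟨0, by norm_num, ?_⟩
        have hble : b ≤ 0 := by rw [hc0] at hcge; simpa using hcge
        have hd0 : ε * (γ - a) = 0 := abs_nonpos_iff.mp (habsd.trans hble)
        rw [zero_mul, hd0]
      · exact ⟨ε * (γ - a) / (Complex.arg zB - β),
          by rw [abs_div]; exact (div_le_one (abs_pos.2 hc0)).2 (habsd.trans hcge),
          div_mul_cancel₀ _ hc0⟩
    refine ⟨(↑(‖z‖ / ‖y‖) : ℂ) * Complex.exp ((↑(α + ε * a) : ℂ) * Complex.I), ?_,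
      (↑(‖y‖ / ‖x‖) : ℂ) *
        Complex.exp ((↑(μ * Complex.arg zB + β * (1 - μ)) : ℂ) * Complex.I), ?_, ?_⟩
    · rcases hε with h | h
      · exact memA _ ⟨y, hy, Or.inl (by rw [h, ← hzdef, ← hadef]; push_cast; ring_nf)⟩
      · exact memA _ ⟨y, hy, Or.inr (by rw [h, ← hzdef, ← hadef]; push_cast; ring_nf)⟩
    · exact hArc zB hzB ⟨μ, Set.mem_Icc.mpr (abs_le.mp hμ1), by rw [habsB]⟩
    · have hexp : (α + ε * a) + (μ * Complex.arg zB + β * (1 - μ)) = α + β + ε * γ := by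
        linear_combination hμc
      rw [mul_form, hexp, ← hr]
      exact hw.symm
  · -- arcMinus case
    have hnegzB : -zB = (↑(‖y‖ / ‖x‖) : ℂ) *
        Complex.exp ((↑(β + b + Real.pi) : ℂ) * Complex.I) := by
      rw [hzBdef, show ((β + b + Real.pi : ℝ):ℂ) = ((β + b : ℝ):ℂ) + (Real.pi:ℂ) by push_cast; ring,
        add_mul, Complex.exp_add, Complex.exp_pi_mul_I]
      ring
    have habsnB : ‖-zB‖ = ‖y‖ / ‖x‖ := by
      rw [hnegzB]; exact abs_rho_exp _ _ hρB_pos.le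
    obtain ⟨k, hk⟩ : ∃ k : ℤ, Complex.arg (-zB) = β + b + Real.pi + 2 * Real.pi * k := by
      rw [hnegzB]; exact arg_exists _ _ hρB_pos
    have hcge : Real.pi - b ≤ |Complex.arg (-zB) - β| := by
      rcases le_or_gt 0 (k:ℝ) with h | h
      · have h2 : Real.pi - b ≤ Complex.arg (-zB) - β := by nlinarith [Real.pi_pos]
        exact h2.trans (le_abs_self _)
      · have hk1 : (k:ℝ) ≤ -1 := by
          have h3 : k < 0 := by exact_mod_cast h
          have h4 : k ≤ -1 := by omega
          exact_mod_cast h4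
        have h2 : Real.pi - b ≤ -(Complex.arg (-zB) - β) := by nlinarith [Real.pi_pos]
        exact h2.trans (neg_le_abs _)
    have habsD : |ε * (γ + a - Real.pi)| ≤ Real.pi - b := by
      rw [abs_mul, hεabs, one_mul, abs_le]
      constructor <;> linarith
    obtain ⟨μ, hμ1, hμc⟩ : ∃ μ : ℝ, |μ| ≤ 1 ∧
        μ * (Complex.arg (-zB) - β) = ε * (γ + a - Real.pi) := by
      by_cases hc0 : Complex.arg (-zB) - β = 0
      · refine ⟨0, by norm_num, ?_⟩
        have hble : Real.pi - b ≤ 0 := by rw [hc0] at hcge; simpa using hcge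
        have hd0 : ε * (γ + a - Real.pi) = 0 := abs_nonpos_iff.mp (habsD.trans hble)
        rw [zero_mul, hd0]
      · exact ⟨ε * (γ + a - Real.pi) / (Complex.arg (-zB) - β),
          by rw [abs_div]; exact (div_le_one (abs_pos.2 hc0)).2 (habsD.trans hcge),
          div_mul_cancel₀ _ hc0⟩
    refine ⟨(↑(‖z‖ / ‖y‖) : ℂ) * Complex.exp ((↑(α + (-ε) * a) : ℂ) * Complex.I), ?_,
      -((↑(‖y‖ / ‖x‖) : ℂ) *
        Complex.exp ((↑(μ * Complex.arg (-zB) + β * (1 - μ)) : ℂ) * Complex.I)), ?_, ?_⟩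
    · rcases hε with h | h
      · exact memA _ ⟨y, hy, Or.inr (by rw [h, ← hzdef, ← hadef]; push_cast; ring_nf)⟩
      · exact memA _ ⟨y, hy, Or.inl (by rw [h, ← hzdef, ← hadef]; push_cast; ring_nf)⟩
    · refine hArc zB hzB ?_
      rw [arcMinus, Set.mem_neg, neg_neg]
      exact ⟨μ, Set.mem_Icc.mpr (abs_le.mp hμ1), by rw [habsnB]⟩
    · rw [mul_neg, mul_form, neg_form]
      rcases hε with h | h
      · subst h
        have hexp : ((α + (-1:ℝ) * a) + (μ * Complex.arg (-zB) + β * (1 - μ))) + Real.pi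
            = α + β + 1 * γ := by linear_combination hμc
        rw [hexp, ← hr]
        exact hw.symm
      · subst h
        have hexp : ((α + (-(-1:ℝ)) * a) + (μ * Complex.arg (-zB) + β * (1 - μ))) + Real.pi
            = (α + β + (-1) * γ) + 2 * Real.pi := by linear_combination hμc
        rw [hexp, exp_period, ← hr]
        exact hw.symm
end

section
/- Let C ∈ ℂ^{n×n} be nonsingular and θ ∈ ℝ. Then SRG_θ(C^{−1}) = (SRG_{−θ}(C))^{−1}, where for a set S ⊂ ℂ not containing 0, S^{−1} = {z^{−1} : z ∈ S}. -/
open scoped Pointwise Classical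
open Complex

section Aux

private lemma mapply_mapply {n : ℕ} (A B : Matrix (Fin n) (Fin n) ℂ)
    (x : EuclideanSpace ℂ (Fin n)) : mapply A (mapply B x) = mapply (A * B) x := by
  simp [mapply, Matrix.toEuclideanLin, Matrix.mulVec_mulVec]

private lemma mapply_one {n : ℕ} (x : EuclideanSpace ℂ (Fin n)) : mapply 1 x = x := by
  simp [mapply, Matrix.toEuclideanLin]

private lemma angleTheta_symm {n : ℕ} (θ : ℝ) (a b : EuclideanSpace ℂ (Fin n)) :
    angleTheta θ a b = angleTheta (-θ) b a := by
  unfold angleTheta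
  by_cases h : a = 0 ∨ b = 0
  · simp [h, h.symm]
  · push_neg at h
    rw [if_neg (by tauto), if_neg (by tauto)]
    have hc : Complex.exp (-((-θ : ℝ) : ℂ) * Complex.I)
        = (starRingEnd ℂ) (Complex.exp (-(θ:ℂ) * Complex.I)) := by
      rw [← Complex.exp_conj]
      congr 1
      simp [map_mul, Complex.conj_I]
    congr 1
    rw [mul_comm ‖b‖]
    congr 1
    rw [inner_smul_right, inner_smul_right, ← inner_conj_symm a b, hc]
    rw [← Complex.conj_re (Complex.exp (-(θ:ℂ) * Complex.I) * (starRingEnd ℂ) (inner ℂ b a)),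
      map_mul, Complex.conj_conj]

private lemma inv_polar (r s t : ℝ) (h : s = -t) :
    ((r : ℂ) * Complex.exp ((s : ℂ) * Complex.I))⁻¹
      = ((r⁻¹ : ℝ) : ℂ) * Complex.exp ((t : ℂ) * Complex.I) := by
  subst h
  rw [mul_inv, ← Complex.exp_neg]
  push_cast
  ring_nf

end Aux

/-- θ-symmetric SRG of the inverse matrix. -/
theorem stmt14 {n : ℕ} (C : Matrix (Fin n) (Fin n) ℂ) (hC : IsUnit C) (θ : ℝ) :
    SRGt θ C⁻¹ = (fun z : ℂ => z⁻¹) '' SRGt (-θ) C := by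
  have hdet : IsUnit C.det := (Matrix.isUnit_iff_isUnit_det C).mp hC
  have hCC : C * C⁻¹ = 1 := Matrix.mul_nonsing_inv C hdet
  have hCC' : C⁻¹ * C = 1 := Matrix.nonsing_inv_mul C hdet
  have hinv1 : ∀ x, mapply C (mapply C⁻¹ x) = x := fun x => by
    rw [mapply_mapply, hCC, mapply_one]
  have hinv2 : ∀ x, mapply C⁻¹ (mapply C x) = x := fun x => by
    rw [mapply_mapply, hCC', mapply_one]
  ext w
  constructor
  · rintro ⟨x, hx, hw⟩
    set y := mapply C⁻¹ x with hy
    have hxy : mapply C y = x := hinv1 x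
    have hy0 : y ≠ 0 := by
      intro h
      apply hx
      rw [← hxy, h]
      simp [mapply]
    have hang : angleTheta θ x y = angleTheta (-θ) y (mapply C y) := by
      rw [hxy, ← hxy]
      exact angleTheta_symm θ (mapply C y) y
    set a := angleTheta (-θ) y (mapply C y) with ha
    have hr : (‖y‖ / ‖x‖ : ℝ) = (‖mapply C y‖ / ‖y‖)⁻¹ := by
      rw [hxy, inv_div]
    rcases hw with hw | hw
    · refine ⟨(↑(‖mapply C y‖ / ‖y‖) : ℂ) *
        Complex.exp ((↑(-θ - a) : ℂ) * Complex.I), ⟨y, hy0, Or.inr rfl⟩, ?_⟩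
      show _⁻¹ = _
      rw [hw, hang, inv_polar _ _ (θ + a) (by ring), ← hr]
    · refine ⟨(↑(‖mapply C y‖ / ‖y‖) : ℂ) *
        Complex.exp ((↑(-θ + a) : ℂ) * Complex.I), ⟨y, hy0, Or.inl rfl⟩, ?_⟩
      show _⁻¹ = _
      rw [hw, hang, inv_polar _ _ (θ - a) (by ring), ← hr]
  · rintro ⟨z, ⟨y, hy0, hz⟩, rfl⟩
    set x := mapply C y with hx
    have hyx : mapply C⁻¹ x = y := hinv2 y
    have hx0 : x ≠ 0 := by
      intro h
      apply hy0
      rw [← hyx, h]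
      simp [mapply]
    refine ⟨x, hx0, ?_⟩
    have hang : angleTheta θ x (mapply C⁻¹ x) = angleTheta (-θ) y (mapply C y) := by
      rw [hyx]
      exact angleTheta_symm θ (mapply C y) y
    set a := angleTheta (-θ) y (mapply C y) with ha
    have hr : (‖mapply C⁻¹ x‖ / ‖x‖ : ℝ) = (‖mapply C y‖ / ‖y‖)⁻¹ := by
      rw [hyx, ← hx, inv_div]
    rcases hz with hz | hz
    · right
      show _⁻¹ = _
      rw [hz, hang, hr, inv_polar _ _ (θ - a) (by ring)]
    · left
      show _⁻¹ = _
      rw [hz, hang, hr, inv_polar _ _ (θ + a) (by ring)]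
end
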